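/- For every unordered word w and every DIME E, w ∈ L(E) if and only if w ⊨ Δ_E. -/

import Mathlib

set_option autoImplicit false

universe u v w

/-- An unordered word over an alphabet `σ`: a multiset over `σ`,
viewed as a function giving the number of occurrences of each symbol. -/
def UWord (σ : Type u) : Type u := σ → ℕ

/-- The empty unordered word `ε`. -/
def UWord.zero {σ : Type u} : UWord σ := fun _ => 0

/-- Unordered concatenation (multiset union) of two unordered words. -/
def UWord.add {σ : Type u} (w₁ w₂ : UWord σ) : UWord σ := fun a => w₁ a + w₂ a

/-- The unordered word consisting of a single occurrence of `a`. -/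
def UWord.single {σ : Type u} [DecidableEq σ] (a : σ) : UWord σ :=
  fun b => if b = a then 1 else 0

/-- Unordered concatenation of a list of unordered words. -/
def listSum {σ : Type u} (l : List (UWord σ)) : UWord σ := l.foldr UWord.add UWord.zero

/-- An interval multiplicity `[lo,hi]` (with `hi ∈ ℕ ∪ {∞}`), where the flag
`opt` marks the variant `[lo,hi]?` that additionally allows zero iterations. -/
structure Iv : Type where
  lo : ℕ
  hi : ℕ∞
  opt : Bool

/-- Membership of a number of iterations in the set denoted by an interval multiplicity. -/
def Iv.Mem (I : Iv) (n : ℕ) : Prop :=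
  (I.lo ≤ n ∧ (n : ℕ∞) ≤ I.hi) ∨ (I.opt = true ∧ n = 0)

/-- The multiplicity `1 = [1,1]`. -/
def Iv.one : Iv := ⟨1, 1, false⟩
/-- The multiplicity `? = [0,1]`. -/
def Iv.qmark : Iv := ⟨0, 1, false⟩
/-- The multiplicity `+ = [1,∞]`. -/
def Iv.iplus : Iv := ⟨1, ⊤, false⟩
/-- The multiplicity `* = [0,∞]`. -/
def Iv.istar : Iv := ⟨0, ⊤, false⟩

/-- An atom `(a₁^{I₁} || ⋯ || a_k^{I_k})`: a list of symbols, each with a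
multiplicity `1` (flag `true`) or `?` (flag `false`). -/
abbrev Atom (σ : Type u) : Type u := List (σ × Bool)

/-- A clause `(A₁^{I₁} | ⋯ | A_k^{I_k})`: a list of atoms with interval multiplicities. -/
abbrev Clause (σ : Type u) : Type u := List (Atom σ × Iv)

/-- A disjunctive interval multiplicity expression `(D₁^{I₁} || ⋯ || D_k^{I_k})`
(as raw syntax; well-formedness is `DIME.WF`). -/
structure DIME (σ : Type u) : Type u where
  clauses : List (Clause σ × Iv)

/-- Language of a single symbol with its multiplicity (`1` or `?`) inside an atom. -/
def atomEntryLang {σ : Type u} [DecidableEq σ] (p : σ × Bool) : Set (UWord σ) :=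
  if p.2 = true then {UWord.single p.1} else {UWord.single p.1, UWord.zero}

/-- Unordered concatenation of the languages of the items of a list. -/
def listConcLang {σ : Type u} {α : Type v} (f : α → Set (UWord σ)) :
    List α → Set (UWord σ)
  | [] => {UWord.zero}
  | x :: xs => {w | ∃ w₁ ∈ f x, ∃ w₂ ∈ listConcLang f xs, w = w₁.add w₂}

/-- The language of an atom. -/
def Atom.lang {σ : Type u} [DecidableEq σ] (A : Atom σ) : Set (UWord σ) :=
  listConcLang atomEntryLang A

/-- The language `L(E^I)` obtained by iterating a language `L` according to
an interval multiplicity `I`. -/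
def iterLang {σ : Type u} (L : Set (UWord σ)) (I : Iv) : Set (UWord σ) :=
  {w | (∃ l : List (UWord σ),
          (∀ x ∈ l, x ∈ L) ∧ I.lo ≤ l.length ∧ (l.length : ℕ∞) ≤ I.hi ∧ w = listSum l) ∨
       (I.opt = true ∧ w = UWord.zero)}

/-- The language of a clause: disjunction of its atoms with intervals. -/
def Clause.lang {σ : Type u} [DecidableEq σ] (D : Clause σ) : Set (UWord σ) :=
  {w | ∃ p ∈ D, w ∈ iterLang (Atom.lang p.1) p.2}

/-- The language of a DIME: the unordered concatenation of its clauses with intervals. -/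
def DIME.lang {σ : Type u} [DecidableEq σ] (E : DIME σ) : Set (UWord σ) :=
  listConcLang (fun p => iterLang (Clause.lang p.1) p.2) E.clauses

/-- A clause is simple if all its atoms carry multiplicity `1` or `?`. -/
def Clause.Simple {σ : Type u} (D : Clause σ) : Prop :=
  ∀ p ∈ D, p.2 = Iv.one ∨ p.2 = Iv.qmark

/-- The list of all symbol occurrences in a DIME. -/
def DIME.symbols {σ : Type u} (E : DIME σ) : List σ :=
  E.clauses.flatMap fun p => p.1.flatMap fun q => q.1.map Prod.fst

/-- Well-formedness of a DIME `(D₁^{I₁} || ⋯ || D_k^{I_k})`: each `D_i` is either a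
simple clause with `I_i ∈ {+,*}`, or a clause with `I_i ∈ {1,?}`; moreover no symbol
occurs twice in the whole expression. -/
def DIME.WF {σ : Type u} (E : DIME σ) : Prop :=
  (∀ p ∈ E.clauses,
      (Clause.Simple p.1 ∧ (p.2 = Iv.iplus ∨ p.2 = Iv.istar)) ∨
      (p.2 = Iv.one ∨ p.2 = Iv.qmark)) ∧
  E.symbols.Nodup

/-- Conflicting pairs of siblings `C_E` of a language of unordered words. -/
def Cset {σ : Type u} (L : Set (UWord σ)) : Set (σ × σ) :=
  {p | ∀ w ∈ L, ¬(w p.1 ≠ 0 ∧ w p.2 ≠ 0)}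

/-- Extended cardinality map `N_E` of a language of unordered words. -/
def Nset {σ : Type u} (L : Set (UWord σ)) : Set (σ × ℕ) :=
  {p | ∃ w ∈ L, w p.1 = p.2}

/-- Collections of required symbols `P_E` of a language of unordered words. -/
def Pset {σ : Type u} (L : Set (UWord σ)) : Set (Set σ) :=
  {X | ∀ w ∈ L, ∃ a ∈ X, w a ≠ 0}

/-- Counting dependencies `K_E` of a language of unordered words. -/
def Kset {σ : Type u} (L : Set (UWord σ)) : Set (σ × σ) :=
  {p | ∀ w ∈ L, w p.2 ≤ w p.1}

/-- Satisfaction `w ⊨ Δ_E` of the characterizing tuple `(C_E, N_E, P_E, K_E)`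
of the language `L = L(E)` by an unordered word `w`. -/
def SatTuple {σ : Type u} (L : Set (UWord σ)) (w : UWord σ) : Prop :=
  (∀ p ∈ Cset L, ¬(w p.1 ≠ 0 ∧ w p.2 ≠ 0)) ∧
  (∀ a : σ, (a, w a) ∈ Nset L) ∧
  (∀ X ∈ Pset L, ∃ a ∈ X, w a ≠ 0) ∧
  (∀ p ∈ Kset L, w p.2 ≤ w p.1)

/-- Subsumption `Δ_{E'} ≼ Δ_E` of characterizing tuples, for `L' = L(E')` and `L = L(E)`:
`C_E ⊆ C_{E'}`, `N_{E'} ⊆ N_E`, `P_E ⊆ P_{E'}`, and `K_E ⊆ K_{E'}`. -/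
def TupleLE {σ : Type u} (L' L : Set (UWord σ)) : Prop :=
  Cset L ⊆ Cset L' ∧ Nset L' ⊆ Nset L ∧ Pset L ⊆ Pset L' ∧ Kset L ⊆ Kset L'

/-! Since no symbol occurs twice, `L(E)` is the product of the languages of its clauses over
pairwise disjoint alphabets, and `w ⊨ Δ_E` restricts to `w|_D ⊨ Δ_{D^I}` on the symbols of each
clause `D^I`; so it suffices to treat one clause. The empty word is settled by `P_E` with
`X = Σ`. For a simple clause under `+` or `*`, the counting dependencies say that in every atom
the mandatory symbols have the largest count, which is what is needed to peel `w` into atom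
words. For a clause under `1` or `?`, the conflict pairs confine a nonzero `w` to a single atom
`A^J`; there the number of iterations is the common count of the mandatory symbols, or
`max(lo J, max count)` if there are none, and `N_E` shows it is admissible. -/

open List

section

variable {σ : Type*}

namespace UWord

@[simp] lemma add_apply (w₁ w₂ : UWord σ) (a : σ) : w₁.add w₂ a = w₁ a + w₂ a := rfl

@[simp] lemma zero_apply (a : σ) : (UWord.zero : UWord σ) a = 0 := rfl

noncomputable def restrict (w : UWord σ) (S : List σ) : UWord σ := {a | a ∈ S}.indicator w

lemma restrict_of_mem {w : UWord σ} {S : List σ} {a : σ} (h : a ∈ S) : w.restrict S a = w a :=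
  Set.indicator_of_mem (s := {a | a ∈ S}) h _

lemma restrict_of_notMem {w : UWord σ} {S : List σ} {a : σ} (h : a ∉ S) :
    w.restrict S a = 0 :=
  Set.indicator_of_notMem (s := {a | a ∈ S}) h _

lemma restrict_congr {w w' : UWord σ} {S : List σ} (h : ∀ a ∈ S, w a = w' a) :
    w.restrict S = w'.restrict S :=
  funext fun a => by
    by_cases ha : a ∈ S
    · simp [restrict_of_mem ha, h a ha]
    · simp [restrict_of_notMem ha]

lemma restrict_eq_self {w : UWord σ} {S : List σ} (h : ∀ a ∉ S, w a = 0) : w.restrict S = w :=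
  funext fun a => by
    by_cases ha : a ∈ S
    · simp [restrict_of_mem ha]
    · simp [restrict_of_notMem ha, h a ha]

end UWord

open UWord

lemma listSum_apply (l : List (UWord σ)) (a : σ) : listSum l a = (l.map (· a)).sum := by
  induction l with
  | nil => rfl
  | cons x l ih => exact congrArg (x a + ·) ih

lemma listSum_singleton (x : UWord σ) : listSum [x] = x :=
  funext fun a => by simp [listSum_apply]

lemma listSum_append (l₁ l₂ : List (UWord σ)) :
    listSum (l₁ ++ l₂) = (listSum l₁).add (listSum l₂) :=
  funext fun a => by simp [listSum_apply]

lemma mem_listConcLang_iff {α : Type*} {f : α → Set (UWord σ)} {g : α → List σ} {l : List α}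
    (hnd : (l.flatMap g).Nodup) (hf : ∀ p ∈ l, ∀ x ∈ f p, ∀ a ∉ g p, x a = 0) {w : UWord σ} :
    w ∈ listConcLang f l ↔
      (∀ a ∉ l.flatMap g, w a = 0) ∧ ∀ p ∈ l, w.restrict (g p) ∈ f p := by
  induction l generalizing w with
  | nil =>
    refine ⟨fun h => ⟨fun a _ => congrFun (Set.mem_singleton_iff.1 h) a, by simp⟩,
      fun h => Set.mem_singleton_iff.2 (funext fun a => h.1 a (not_mem_nil))⟩
  | cons q l ih =>
    rw [flatMap_cons, nodup_append] at hnd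
    obtain ⟨-, hndl, hdisj⟩ := hnd
    have ih (v : UWord σ) := @ih hndl (fun p hp => hf p (mem_cons_of_mem _ hp)) v
    have hq : ∀ x ∈ f q, ∀ a ∉ g q, x a = 0 := hf q mem_cons_self
    have hsep : ∀ a ∈ g q, a ∉ l.flatMap g := fun a ha ha' => hdisj a ha a ha' rfl
    have hsep' : ∀ p ∈ l, ∀ a ∈ g p, a ∉ g q := fun p hp a ha haq =>
      hsep a haq (mem_flatMap.2 ⟨p, hp, ha⟩)
    constructor
    · rintro ⟨w₁, hw₁, w₂, hw₂, rfl⟩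
      obtain ⟨hsupp₂, hw₂⟩ := (ih _).1 hw₂
      refine ⟨fun a ha => ?_, fun p hp => ?_⟩
      · rw [flatMap_cons, mem_append, not_or] at ha
        simp [hq w₁ hw₁ a ha.1, hsupp₂ a ha.2]
      rcases mem_cons.1 hp with rfl | hp
      · have : (w₁.add w₂).restrict (g p) = w₁ :=
          (restrict_congr fun a ha => by simp [hsupp₂ a (hsep a ha)]).trans
            (restrict_eq_self (hq w₁ hw₁))
        rwa [this]
      · have : (w₁.add w₂).restrict (g p) = w₂.restrict (g p) :=
          restrict_congr fun a ha => by simp [hq w₁ hw₁ a (hsep' p hp a ha)]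
        exact this ▸ hw₂ p hp
    · rintro ⟨hsupp, hmem⟩
      refine ⟨_, hmem q mem_cons_self, w.restrict (l.flatMap g),
        (ih _).2 ⟨fun a ha => restrict_of_notMem ha, fun p hp => ?_⟩, funext fun a => ?_⟩
      · rw [restrict_congr fun a ha => restrict_of_mem (mem_flatMap.2 ⟨p, hp, ha⟩)]
        exact hmem p (mem_cons_of_mem _ hp)
      · by_cases haq : a ∈ g q
        · simp [restrict_of_mem haq, restrict_of_notMem (hsep a haq)]
        by_cases hal : a ∈ l.flatMap g
        · simp [restrict_of_notMem haq, restrict_of_mem hal]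
        · simp [restrict_of_notMem haq, restrict_of_notMem hal, hsupp a (by simp [haq, hal])]

section Tuple

variable {L L' : Set (UWord σ)} {w : UWord σ}

lemma satTuple_of_mem (hw : w ∈ L) : SatTuple L w :=
  ⟨fun _ hp => hp w hw, fun _ => ⟨w, hw, rfl⟩, fun _ hX => hX w hw, fun _ hp => hp w hw⟩

lemma SatTuple.restrict {S : List σ} (hL : ∀ x ∈ L, x.restrict S ∈ L') (hw : SatTuple L w) :
    SatTuple L' (w.restrict S) := by
  obtain ⟨hC, hN, hP, hK⟩ := hw
  have mem_of_ne {x : UWord σ} {a : σ} (h : x.restrict S a ≠ 0) : a ∈ S :=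
    by_contra fun haS => h (restrict_of_notMem haS)
  refine ⟨fun ⟨a, b⟩ hab ⟨ha, hb⟩ => ?_, fun a => ?_, fun X hX => ?_, fun ⟨a, b⟩ hab => ?_⟩
  · have haS := mem_of_ne ha
    have hbS := mem_of_ne hb
    rw [restrict_of_mem haS] at ha
    rw [restrict_of_mem hbS] at hb
    refine hC (a, b) (fun x hx => ?_) ⟨ha, hb⟩
    simpa [restrict_of_mem haS, restrict_of_mem hbS] using hab _ (hL x hx)
  · obtain ⟨x, hx, hxa⟩ := hN a
    refine ⟨x.restrict S, hL x hx, ?_⟩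
    by_cases haS : a ∈ S
    · simpa [restrict_of_mem haS] using hxa
    · simp [restrict_of_notMem haS]
  · obtain ⟨a, ⟨haX, haS⟩, ha⟩ := hP {a ∈ X | a ∈ S} fun x hx => by
      obtain ⟨a, haX, ha⟩ := hX _ (hL x hx)
      exact ⟨a, ⟨haX, mem_of_ne ha⟩, by rwa [restrict_of_mem (mem_of_ne ha)] at ha⟩
    exact ⟨a, haX, by rwa [restrict_of_mem haS]⟩
  · show w.restrict S b ≤ w.restrict S a
    by_cases hbS : b ∈ S
    swap
    · simp [restrict_of_notMem hbS]
    by_cases haS : a ∈ S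
    · rw [restrict_of_mem haS, restrict_of_mem hbS]
      refine hK (a, b) fun x hx => ?_
      simpa [restrict_of_mem haS, restrict_of_mem hbS] using hab _ (hL x hx)
    · obtain ⟨x, hx, hxb⟩ := hN b
      have hx0 := hab _ (hL x hx)
      simp only [restrict_of_mem hbS, restrict_of_notMem haS, nonpos_iff_eq_zero] at hx0
      have hwb : w b = 0 := hxb.symm.trans hx0
      simp [restrict_of_mem hbS, hwb]

lemma mem_listConcLang_of_satTuple {α : Type*} {f : α → Set (UWord σ)} {g : α → List σ}
    {l : List α} (hnd : (l.flatMap g).Nodup) (hf : ∀ p ∈ l, ∀ x ∈ f p, ∀ a ∉ g p, x a = 0)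
    (hchar : ∀ p ∈ l, ∀ v, SatTuple (f p) v → v ∈ f p) {w : UWord σ}
    (hw : SatTuple (listConcLang f l) w) : w ∈ listConcLang f l := by
  refine (mem_listConcLang_iff hnd hf).2 ⟨fun a ha => ?_, fun p hp => hchar p hp _ ?_⟩
  · obtain ⟨x, hx, hxa⟩ := hw.2.1 a
    exact hxa.symm.trans (((mem_listConcLang_iff hnd hf).1 hx).1 a ha)
  · exact hw.restrict fun x hx => ((mem_listConcLang_iff hnd hf).1 hx).2 p hp

lemma SatTuple.mem_of_forall_eq_zero (hw : SatTuple L w) (h0 : ∀ a, w a = 0) : w ∈ L := by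
  by_contra hwL
  obtain ⟨a, -, ha⟩ := hw.2.2.1 Set.univ fun x hx => by
    by_contra! hx0
    exact hwL (funext (fun a => (h0 a).trans (hx0 a trivial).symm) ▸ hx)
  exact ha (h0 a)

end Tuple

section Iteration

variable {L : Set (UWord σ)} {I : Iv} {x : UWord σ}

lemma listSum_mem_iterLang {l : List (UWord σ)} (hl : ∀ y ∈ l, y ∈ L) (hlo : I.lo ≤ l.length)
    (hhi : (l.length : ℕ∞) ≤ I.hi) : listSum l ∈ iterLang L I :=
  Or.inl ⟨l, hl, hlo, hhi, rfl⟩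

lemma apply_eq_zero_of_mem_iterLang {a : σ} (hL : ∀ y ∈ L, y a = 0) (hx : x ∈ iterLang L I) :
    x a = 0 := by
  rcases hx with ⟨l, hl, -, -, rfl⟩ | ⟨-, rfl⟩
  · rw [listSum_apply, sum_eq_zero]
    simpa using fun y hy => hL y (hl y hy)
  · rfl

lemma Kset_subset_Kset_iterLang : Kset L ⊆ Kset (iterLang L I) := by
  rintro ⟨a, b⟩ hab x (⟨l, hl, -, -, rfl⟩ | ⟨-, rfl⟩)
  · show listSum l b ≤ listSum l a
    rw [listSum_apply, listSum_apply]
    exact sum_le_sum fun y hy => hab y (hl y hy)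
  · exact le_rfl

lemma mem_iterLang_of_mem (hI : I = Iv.one ∨ I = Iv.qmark) (hx : x ∈ L) : x ∈ iterLang L I := by
  have h := listSum_mem_iterLang (L := L) (I := I) (l := [x]) (by simpa using hx)
    (by rcases hI with rfl | rfl <;> simp [Iv.one, Iv.qmark])
    (by rcases hI with rfl | rfl <;> simp [Iv.one, Iv.qmark])
  rwa [listSum_singleton] at h

lemma mem_of_mem_iterLang (hI : I = Iv.one ∨ I = Iv.qmark) (hx : x ∈ iterLang L I) {a : σ}
    (ha : x a ≠ 0) : x ∈ L := by
  have hopt : I.opt = false := by rcases hI with rfl | rfl <;> rfl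
  have hhi : I.hi = 1 := by rcases hI with rfl | rfl <;> rfl
  rcases hx with ⟨l, hl, -, hlen, rfl⟩ | ⟨hI, -⟩
  · rw [hhi, Nat.cast_le_one] at hlen
    match l, hlen with
    | [], _ => exact absurd rfl ha
    | [y], _ => simpa [listSum_singleton] using hl
  · simp [hopt] at hI

end Iteration

def Atom.syms (A : Atom σ) : List σ := A.map Prod.fst

def Atom.MandatoryMax (A : Atom σ) (v : UWord σ) : Prop :=
  ∀ p ∈ A, p.2 = true → ∀ b ∈ A.syms, v b ≤ v p.1

section Atom

variable [DecidableEq σ] {A : Atom σ} {x v : UWord σ}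

lemma restrict_mem_atomEntryLang_iff {p : σ × Bool} :
    x.restrict [p.1] ∈ atomEntryLang p ↔ x p.1 ≤ 1 ∧ (p.2 = true → x p.1 = 1) := by
  obtain ⟨c, fl⟩ := p
  have key (n : ℕ) : x.restrict [c] = (fun b => if b = c then n else 0 : UWord σ) ↔ x c = n := by
    refine ⟨fun h => by simpa [restrict_of_mem (mem_singleton_self c)] using congrFun h c,
      fun h => funext fun b => ?_⟩
    by_cases hb : b = c
    · subst hb; simp [restrict_of_mem (mem_singleton_self b), h]
    · simp [restrict_of_notMem (show b ∉ [c] by simpa using hb), hb]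
  have hzero : (UWord.zero : UWord σ) = fun b => if b = c then 0 else 0 := by
    funext b; simp
  have hsingle : UWord.single c = (fun b => if b = c then 1 else 0 : UWord σ) := rfl
  cases fl
  · change x.restrict [c] ∈ ({UWord.single c, UWord.zero} : Set (UWord σ)) ↔ _
    rw [Set.mem_insert_iff, Set.mem_singleton_iff, hsingle, hzero, key, key]
    simp only [Bool.false_eq_true, false_implies, and_true]
    omega
  · change x.restrict [c] ∈ ({UWord.single c} : Set (UWord σ)) ↔ _
    rw [Set.mem_singleton_iff, hsingle, key]
    simp only [forall_const]
    omega

lemma mem_atomLang_iff (hnd : A.syms.Nodup) :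
    x ∈ Atom.lang A ↔ (∀ a ∉ A.syms, x a = 0) ∧ ∀ p ∈ A, x p.1 ≤ 1 ∧ (p.2 = true → x p.1 = 1) := by
  have hsyms : A.flatMap (fun p => [p.1]) = A.syms := map_eq_flatMap.symm
  have hentry : ∀ p ∈ A, ∀ y ∈ atomEntryLang p, ∀ a ∉ [p.1], y a = 0 := by
    rintro ⟨c, fl⟩ - y hy a ha
    have hac : a ≠ c := by simpa using ha
    cases fl <;> simp only [atomEntryLang] at hy <;> rcases hy with rfl | rfl <;>
      simp [UWord.single, hac]
  rw [Atom.lang, mem_listConcLang_iff (hsyms ▸ hnd) hentry, hsyms]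
  simp only [restrict_mem_atomEntryLang_iff]

lemma apply_le_one_of_mem_atomLang (hnd : A.syms.Nodup) (hx : x ∈ Atom.lang A) (a : σ) :
    x a ≤ 1 := by
  obtain ⟨hsupp, hcount⟩ := (mem_atomLang_iff hnd).1 hx
  by_cases ha : a ∈ A.syms
  · obtain ⟨p, hp, rfl⟩ := mem_map.1 ha
    exact (hcount p hp).1
  · simp [hsupp a ha]

lemma apply_eq_zero_of_mem_iterLang_atomLang (hnd : A.syms.Nodup) {J : Iv}
    (hx : x ∈ iterLang (Atom.lang A) J) {a : σ} (ha : a ∉ A.syms) : x a = 0 :=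
  apply_eq_zero_of_mem_iterLang (fun _ hy => ((mem_atomLang_iff hnd).1 hy).1 a ha) hx

lemma mem_Kset_atomLang (hnd : A.syms.Nodup) {p : σ × Bool} (hp : p ∈ A) (ht : p.2 = true)
    {b : σ} : (p.1, b) ∈ Kset (Atom.lang A) := fun _ hx =>
  (apply_le_one_of_mem_atomLang hnd hx b).trans ((((mem_atomLang_iff hnd).1 hx).2 p hp).2 ht).ge

lemma exists_list_atomLang (hnd : A.syms.Nodup) (j : ℕ) (hsupp : ∀ a ∉ A.syms, v a = 0)
    (hle : ∀ a, v a ≤ j) (hmand : ∀ p ∈ A, p.2 = true → v p.1 = j) :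
    ∃ l : List (UWord σ), (∀ y ∈ l, y ∈ Atom.lang A) ∧ l.length = j ∧ listSum l = v := by
  induction j generalizing v with
  | zero => exact ⟨[], by simp, rfl, funext fun a => (Nat.le_zero.1 (hle a)).symm⟩
  | succ j ih =>
    -- one atom word, made of the symbols of maximal count
    set y : UWord σ := fun a => if v a = j + 1 then 1 else 0
    have hy : y ∈ Atom.lang A := by
      refine (mem_atomLang_iff hnd).2 ⟨fun a ha => ?_, fun p hp => ⟨?_, fun ht => ?_⟩⟩
      · simp [y, hsupp a ha]
      · simp only [y]; split_ifs <;> omega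
      · simp [y, hmand p hp ht]
    obtain ⟨l, hl, hlen, hsum⟩ := ih (v := fun a => v a - y a)
      (fun a ha => by simp [hsupp a ha])
      (fun a => by have := hle a; simp only [y]; split_ifs <;> omega)
      (fun p hp ht => by simp [y, hmand p hp ht])
    refine ⟨y :: l, ?_, by simp [hlen], funext fun a => ?_⟩
    · simpa [hy] using hl
    · have := hle a
      show y a + listSum l a = v a
      simp only [hsum, y]
      split_ifs <;> omega

lemma Atom.MandatoryMax.apply_eq_sup (hmax : A.MandatoryMax v) {p : σ × Bool} (hp : p ∈ A)
    (ht : p.2 = true) : v p.1 = A.syms.toFinset.sup v :=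
  le_antisymm (Finset.le_sup (mem_toFinset.2 (mem_map_of_mem hp)))
    (Finset.sup_le fun b hb => hmax p hp ht b (mem_toFinset.1 hb))

lemma exists_length_of_mem_Nset_iterLang_atomLang (hnd : A.syms.Nodup) {J : Iv} {a : σ}
    {n : ℕ} (h : (a, n) ∈ Nset (iterLang (Atom.lang A) J)) (hn : n ≠ 0) :
    ∃ m, J.lo ≤ m ∧ (m : ℕ∞) ≤ J.hi ∧ n ≤ m ∧ ∀ p ∈ A, p.2 = true → p.1 = a → n = m := by
  obtain ⟨x, hx, hxa : x a = n⟩ := h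
  subst hxa
  obtain ⟨l, hl, hlo, hhi, rfl⟩ | ⟨-, rfl⟩ := hx
  · refine ⟨l.length, hlo, hhi, ?_, ?_⟩
    · rw [listSum_apply]
      simpa using sum_le_card_nsmul (l.map (· a)) 1 (by
        simpa using fun y hy => apply_le_one_of_mem_atomLang hnd (hl y hy) a)
    · rintro p hp ht rfl
      rw [listSum_apply, map_congr_left (g := fun _ => 1), map_const',
        sum_replicate, smul_eq_mul, mul_one]
      exact fun y hy => (((mem_atomLang_iff hnd).1 (hl y hy)).2 p hp).2 ht
  · exact absurd rfl hn

theorem mem_iterLang_atomLang (hnd : A.syms.Nodup) {J : Iv} (hmax : A.MandatoryMax v)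
    (hv : ∃ a, v a ≠ 0) (hN : ∀ a, v a ≠ 0 → (a, v a) ∈ Nset (iterLang (Atom.lang A) J)) :
    v ∈ iterLang (Atom.lang A) J := by
  have hwit a (ha : v a ≠ 0) := exists_length_of_mem_Nset_iterLang_atomLang hnd (hN a ha) ha
  have hsupp : ∀ a ∉ A.syms, v a = 0 := fun a ha => by
    by_contra hva
    obtain ⟨x, hx, hxa : x a = v a⟩ := hN a hva
    exact hva (hxa ▸ apply_eq_zero_of_mem_iterLang_atomLang hnd hx ha)
  obtain ⟨a₀, ha₀⟩ := hv
  have ha₀A : a₀ ∈ A.syms := by_contra fun h => ha₀ (hsupp a₀ h)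
  set M := A.syms.toFinset.sup v
  obtain ⟨aM, -, hM : M = v aM⟩ :=
    Finset.exists_mem_eq_sup _ ⟨a₀, mem_toFinset.2 ha₀A⟩ v
  have hle : ∀ a, v a ≤ M := fun a => by
    by_cases ha : a ∈ A.syms
    · exact Finset.le_sup (mem_toFinset.2 ha)
    · simp [hsupp a ha]
  obtain ⟨n₀, hlo₀, hhi₀, -, -⟩ := hwit a₀ ha₀
  obtain ⟨nM, -, hhiM, hleM, -⟩ := hwit aM (by have := hle a₀; omega)
  -- `max J.lo M` iterations: enough for the lower bound, and each count fits
  obtain ⟨l, hl, hlen, rfl⟩ := exists_list_atomLang hnd (max J.lo M) hsupp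
    (fun a => (hle a).trans (le_max_right _ _))
    (fun p hp ht => by
      have hpM := hmax.apply_eq_sup hp ht
      have hp0 := hmax p hp ht a₀ ha₀A
      obtain ⟨n, hlo, -, -, hn⟩ := hwit p.1 (by omega)
      have := hn p hp ht rfl
      omega)
  refine listSum_mem_iterLang hl (hlen ▸ le_max_left _ _) ?_
  rw [hlen, Nat.mono_cast.map_max]
  exact max_le ((Nat.cast_le.2 hlo₀).trans hhi₀) ((Nat.cast_le.2 (hM ▸ hleM)).trans hhiM)

end Atom

def Clause.syms (D : Clause σ) : List σ := D.flatMap fun q => q.1.syms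

namespace Clause

variable {D : Clause σ}

lemma nodup_syms_of_mem (hnd : D.syms.Nodup) {q : Atom σ × Iv} (hq : q ∈ D) :
    q.1.syms.Nodup :=
  (nodup_flatMap.1 hnd).1 q hq

lemma eq_of_mem_syms (hnd : D.syms.Nodup) {q q' : Atom σ × Iv} (hq : q ∈ D)
    (hq' : q' ∈ D) {a : σ} (ha : a ∈ q.1.syms) (ha' : a ∈ q'.1.syms) : q = q' := by
  have : Std.Symm (Function.onFun List.Disjoint fun q : Atom σ × Iv => q.1.syms) :=
    ⟨fun _ _ h => h.symm⟩
  by_contra hne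
  exact (nodup_flatMap.1 hnd).2.forall hq hq' hne ha ha'

end Clause

section ClauseLang

variable [DecidableEq σ] {D : Clause σ} {I : Iv} {x v : UWord σ}

lemma exists_mem_syms_of_mem_clauseLang (hnd : D.syms.Nodup) (hx : x ∈ Clause.lang D) {a : σ}
    (ha : x a ≠ 0) : ∃ q ∈ D, a ∈ q.1.syms ∧ x ∈ iterLang (Atom.lang q.1) q.2 := by
  obtain ⟨q, hq, hxq⟩ := hx
  refine ⟨q, hq, by_contra fun haq => ha ?_, hxq⟩
  exact apply_eq_zero_of_mem_iterLang_atomLang (D.nodup_syms_of_mem hnd hq) hxq haq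

lemma mem_iterLang_of_mem_clauseLang (hnd : D.syms.Nodup) (hx : x ∈ Clause.lang D)
    {q : Atom σ × Iv} (hq : q ∈ D) {a : σ} (haq : a ∈ q.1.syms) (ha : x a ≠ 0) :
    x ∈ iterLang (Atom.lang q.1) q.2 := by
  obtain ⟨q', hq', haq', hxq'⟩ := exists_mem_syms_of_mem_clauseLang hnd hx ha
  rwa [D.eq_of_mem_syms hnd hq hq' haq haq']

lemma apply_eq_zero_of_mem_clauseLang (hnd : D.syms.Nodup) (hx : x ∈ Clause.lang D) {a : σ}
    (ha : a ∉ D.syms) : x a = 0 := by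
  by_contra hxa
  obtain ⟨q, hq, haq, -⟩ := exists_mem_syms_of_mem_clauseLang hnd hx hxa
  exact ha (mem_flatMap.2 ⟨q, hq, haq⟩)

lemma apply_eq_zero_of_mem_iterLang_clauseLang (hnd : D.syms.Nodup)
    (hx : x ∈ iterLang (Clause.lang D) I) {a : σ} (ha : a ∉ D.syms) : x a = 0 :=
  apply_eq_zero_of_mem_iterLang (fun _ hy => apply_eq_zero_of_mem_clauseLang hnd hy ha) hx

lemma mandatoryMax_of_Kset (hnd : D.syms.Nodup)
    (hK : ∀ p ∈ Kset (iterLang (Clause.lang D) I), v p.2 ≤ v p.1) {q : Atom σ × Iv}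
    (hq : q ∈ D) : q.1.MandatoryMax v := by
  intro p hp ht b hb
  refine hK (p.1, b) (Kset_subset_Kset_iterLang fun x hx => ?_)
  show x b ≤ x p.1
  by_cases hxb : x b = 0
  · simp [hxb]
  exact Kset_subset_Kset_iterLang (mem_Kset_atomLang (D.nodup_syms_of_mem hnd hq) hp ht) x
    (mem_iterLang_of_mem_clauseLang hnd hx hq hb hxb)

lemma exists_list_clauseLang (hs : D.Simple) (hnd : D.syms.Nodup) (hsupp : ∀ a ∉ D.syms, v a = 0)
    (hmax : ∀ q ∈ D, q.1.MandatoryMax v) :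
    ∃ l : List (UWord σ), (∀ y ∈ l, y ∈ Clause.lang D) ∧ listSum l = v := by
  induction D generalizing v with
  | nil => exact ⟨[], by simp, funext fun a => (hsupp a (by simp [Clause.syms])).symm⟩
  | cons q D ih =>
    have hsyms : Clause.syms (q :: D) = q.1.syms ++ Clause.syms D := rfl
    rw [hsyms] at hsupp hnd
    obtain ⟨hndq, hndD, hdisj⟩ := nodup_append.1 hnd
    have hsep : ∀ a ∈ q.1.syms, a ∉ Clause.syms D := fun a ha ha' => hdisj a ha a ha' rfl
    obtain ⟨l, hl, hsum⟩ := ih (v := v.restrict (Clause.syms D))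
      (fun p hp => hs p (mem_cons_of_mem _ hp)) hndD (fun a ha => restrict_of_notMem ha)
      fun q' hq' p hp ht b hb => by
        have hD : ∀ {c}, c ∈ q'.1.syms → c ∈ Clause.syms D := fun hc =>
          mem_flatMap.2 ⟨q', hq', hc⟩
        rw [restrict_of_mem (hD hb), restrict_of_mem (hD (mem_map_of_mem hp))]
        exact hmax q' (mem_cons_of_mem _ hq') p hp ht b hb
    obtain ⟨lq, hlq, -, hsumq⟩ := exists_list_atomLang (v := v.restrict q.1.syms) hndq
      (q.1.syms.toFinset.sup v) (fun a ha => restrict_of_notMem ha)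
      (fun a => by
        by_cases ha : a ∈ q.1.syms
        · exact (restrict_of_mem ha).trans_le (Finset.le_sup (mem_toFinset.2 ha))
        · simp [restrict_of_notMem ha])
      (fun p hp ht => (restrict_of_mem (mem_map_of_mem hp)).trans
        ((hmax q mem_cons_self).apply_eq_sup hp ht))
    refine ⟨lq ++ l, fun y hy => ?_, ?_⟩
    · rcases mem_append.1 hy with hy | hy
      · exact ⟨q, mem_cons_self, mem_iterLang_of_mem (hs q mem_cons_self) (hlq y hy)⟩
      · obtain ⟨q', hq', hyq'⟩ := hl y hy
        exact ⟨q', mem_cons_of_mem _ hq', hyq'⟩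
    · rw [listSum_append, hsumq, hsum]
      funext a
      by_cases haq : a ∈ q.1.syms
      · simp [restrict_of_mem haq, restrict_of_notMem (hsep a haq)]
      by_cases haD : a ∈ Clause.syms D
      · simp [restrict_of_notMem haq, restrict_of_mem haD]
      · simp [restrict_of_notMem haq, restrict_of_notMem haD, hsupp a (by simp [haq, haD])]

theorem mem_iterLang_clauseLang_of_simple (hs : D.Simple) (hI : I = Iv.iplus ∨ I = Iv.istar)
    (hnd : D.syms.Nodup) (hv : ∃ a, v a ≠ 0) (hsupp : ∀ a ∉ D.syms, v a = 0)
    (hmax : ∀ q ∈ D, q.1.MandatoryMax v) : v ∈ iterLang (Clause.lang D) I := by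
  obtain ⟨l, hl, rfl⟩ := exists_list_clauseLang hs hnd hsupp hmax
  refine listSum_mem_iterLang hl ?_ (by rcases hI with rfl | rfl <;> exact le_top)
  rcases hI with rfl | rfl
  · obtain ⟨a, ha⟩ := hv
    exact length_pos_of_ne_nil (by rintro rfl; exact ha rfl)
  · exact Nat.zero_le _

theorem mem_iterLang_clauseLang_of_one_or_qmark (hI : I = Iv.one ∨ I = Iv.qmark)
    (hnd : D.syms.Nodup) (hv : SatTuple (iterLang (Clause.lang D) I) v) {a₀ : σ}
    (ha₀ : v a₀ ≠ 0) : v ∈ iterLang (Clause.lang D) I := by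
  obtain ⟨hC, hN, -, hK⟩ := hv
  obtain ⟨u, hu, hua : u a₀ = v a₀⟩ := hN a₀
  obtain ⟨q, hq, ha₀q, -⟩ :=
    exists_mem_syms_of_mem_clauseLang hnd (mem_of_mem_iterLang hI hu (hua ▸ ha₀)) (hua ▸ ha₀)
  -- by the conflict pairs, `v` lives on the atom of `a₀`
  have hsyms : ∀ b, v b ≠ 0 → b ∈ q.1.syms := fun b hb => by
    by_contra hbq
    refine hC (a₀, b) (fun x hx ⟨hxa₀, hxb⟩ => hxb ?_) ⟨ha₀, hb⟩
    exact apply_eq_zero_of_mem_iterLang_atomLang (D.nodup_syms_of_mem hnd hq)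
      (mem_iterLang_of_mem_clauseLang hnd (mem_of_mem_iterLang hI hx hxa₀) hq ha₀q hxa₀) hbq
  refine mem_iterLang_of_mem hI ⟨q, hq, mem_iterLang_atomLang (D.nodup_syms_of_mem hnd hq)
    (mandatoryMax_of_Kset hnd hK hq) ⟨a₀, ha₀⟩ fun a ha => ?_⟩
  obtain ⟨x, hx, hxa : x a = v a⟩ := hN a
  exact ⟨x, mem_iterLang_of_mem_clauseLang hnd (mem_of_mem_iterLang hI hx (hxa ▸ ha)) hq
    (hsyms a ha) (hxa ▸ ha), hxa⟩

theorem mem_iterLang_clauseLang_of_satTuple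
    (hwf : (D.Simple ∧ (I = Iv.iplus ∨ I = Iv.istar)) ∨ (I = Iv.one ∨ I = Iv.qmark))
    (hnd : D.syms.Nodup) (hv : SatTuple (iterLang (Clause.lang D) I) v) :
    v ∈ iterLang (Clause.lang D) I := by
  by_cases h0 : ∀ a, v a = 0
  · exact hv.mem_of_forall_eq_zero h0
  obtain ⟨a₀, ha₀⟩ := not_forall.1 h0
  rcases hwf with ⟨hs, hI⟩ | hI
  · refine mem_iterLang_clauseLang_of_simple hs hI hnd ⟨a₀, ha₀⟩ (fun a ha => ?_)
      fun q hq => mandatoryMax_of_Kset hnd hv.2.2.2 hq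
    obtain ⟨x, hx, hxa : x a = v a⟩ := hv.2.1 a
    exact hxa ▸ apply_eq_zero_of_mem_iterLang_clauseLang hnd hx ha
  · exact mem_iterLang_clauseLang_of_one_or_qmark hI hnd hv ha₀

end ClauseLang

end

theorem statement2_general {σ : Type} [DecidableEq σ]
    (E : DIME σ) (hE : E.WF) (w : UWord σ) :
    w ∈ DIME.lang E ↔ SatTuple (DIME.lang E) w := by
  obtain ⟨hwf, hnd : (E.clauses.flatMap fun p : Clause σ × Iv => Clause.syms p.1).Nodup⟩ := hE
  have hndD : ∀ p ∈ E.clauses, (Clause.syms p.1).Nodup := (nodup_flatMap.1 hnd).1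
  exact ⟨satTuple_of_mem, mem_listConcLang_of_satTuple (g := fun p => Clause.syms p.1) hnd
    (fun p hp _ hx _ ha => apply_eq_zero_of_mem_iterLang_clauseLang (hndD p hp) hx ha)
    fun p hp _ hv => mem_iterLang_clauseLang_of_satTuple (hwf p hp) (hndD p hp) hv⟩

/-- For every unordered word `w` and every DIME `E`,
`w ∈ L(E)` if and only if `w ⊨ Δ_E`. -/
theorem statement2 {σ : Type} [DecidableEq σ] [Fintype σ]
    (E : DIME σ) (hE : E.WF) (w : UWord σ) :
    w ∈ DIME.lang E ↔ SatTuple (DIME.lang E) w :=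
  statement2_general E hE w
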